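/- Multivariate parameter-shift rule: let L : ℝⁿ → ℝ be such that for each index i and each fixed choice of the other coordinates, the map t ↦ L(w with i-th coordinate t) equals a·sin t + b·cos t + c for some constants a, b, c (depending on the other coordinates). Then the partial derivative of L with respect to w_i at w equals (L(w + (π/2)e_i) − L(w − (π/2)e_i))/2. -/
import Mathlib


open Real

theorem multivariate_parameter_shift_rule {n : ℕ}
    (L : (Fin n → ℝ) → ℝ)
    (h : ∀ (i : Fin n) (w : Fin n → ℝ), ∃ a b c : ℝ,
      ∀ t : ℝ, L (Function.update w i t) = a * Real.sin t + b * Real.cos t + c)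
    (i : Fin n) (w : Fin n → ℝ) :
    deriv (fun t : ℝ => L (Function.update w i t)) (w i) =
      (L (w + Pi.single i (π / 2)) - L (w - Pi.single i (π / 2))) / 2 := by
  obtain ⟨a, b, c, hab⟩ := h i w
  have hplus : w + Pi.single i (π / 2) = Function.update w i (w i + π / 2) := by
    funext j
    by_cases hj : j = i
    · subst hj; simp
    · simp [Function.update_of_ne hj, Pi.single_eq_of_ne hj]
  have hminus : w - Pi.single i (π / 2) = Function.update w i (w i - π / 2) := by
    funext j
    by_cases hj : j = i
    · subst hj; simp
    · simp [Function.update_of_ne hj, Pi.single_eq_of_ne hj]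
  have hfun : (fun t : ℝ => L (Function.update w i t)) =
      fun t => a * Real.sin t + b * Real.cos t + c := funext hab
  rw [hfun, hplus, hminus, hab, hab]
  have hd : HasDerivAt (fun t : ℝ => a * Real.sin t + b * Real.cos t + c)
      (a * Real.cos (w i) + b * -Real.sin (w i)) (w i) := by
    exact (((Real.hasDerivAt_sin (w i)).const_mul a).add
      ((Real.hasDerivAt_cos (w i)).const_mul b)).add_const c
  rw [hd.deriv]
  rw [Real.sin_add, Real.cos_add, Real.sin_sub, Real.cos_sub]
  simp
  ring
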